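/- The C-algebra Γ := C⟨a,b⟩/(ab+ba, -a²+b³+aba) is nine-dimensional as a C-vector space. -/

import Mathlib

/-!
From `ab = -ba` one gets `bʲa = (-1)ʲabʲ`, and the cubic relation becomes `b³ = a²(1 + b)`.
Computing `b³a` in the two resulting ways gives `2a³ = 0`, so `a³ = 0`, and every element of Γ
is a combination of the nine monomials `aⁱbʲ` with `i, j < 3`. They are linearly independent
because Γ acts on `ℂ⁹` (its left regular representation, written down explicitly) with
`aⁱbʲ` sending the first basis vector to the `(i, j)`-th one.
-/

open FreeAlgebra

/-- The relations defining the contraction algebra Γ = C⟨a,b⟩/(ab+ba, -a²+b³+aba),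
with a = ι ℂ 0 and b = ι ℂ 1. -/
inductive GamRel : FreeAlgebra ℂ (Fin 2) → FreeAlgebra ℂ (Fin 2) → Prop
  | r1 : GamRel (ι ℂ 0 * ι ℂ 1 + ι ℂ 1 * ι ℂ 0) 0
  | r2 : GamRel (-(ι ℂ 0) ^ 2 + (ι ℂ 1) ^ 3 + ι ℂ 0 * ι ℂ 1 * ι ℂ 0) 0

section AnticommutingPair

variable {R : Type*} [Ring R] {a b : R}

theorem pow_mul_eq_neg_one_pow_smul (hba : b * a = -(a * b)) (j : ℕ) :
    b ^ j * a = ((-1) ^ j : ℤ) • (a * b ^ j) := by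
  induction j with
  | zero => simp
  | succ j ih =>
    rw [pow_succ, mul_assoc, hba, mul_neg, ← mul_assoc, ih, pow_succ, mul_neg_one, neg_smul,
      smul_mul_assoc, mul_assoc]

theorem pow_three_eq_sq_mul (hba : b * a = -(a * b)) (hrel : -a ^ 2 + b ^ 3 + a * b * a = 0) :
    b ^ 3 = a ^ 2 * (1 + b) := by
  rw [mul_assoc, hba] at hrel
  rw [← sub_eq_zero, ← hrel]
  noncomm_ring

/-- Computing `b ^ 3 * a` through `b ^ 3 = a ^ 2 * (1 + b)` and by moving `a` across `b ^ 3`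
gives `a ^ 3 * (1 - b) = -a ^ 3 * (1 + b)`. -/
theorem pow_three_add_pow_three_eq_zero (hba : b * a = -(a * b))
    (hrel : -a ^ 2 + b ^ 3 + a * b * a = 0) : a ^ 3 + a ^ 3 = 0 := by
  have hb3 := pow_three_eq_sq_mul hba hrel
  have h : a ^ 2 * (1 + b) * a = -(a * (a ^ 2 * (1 + b))) := by
    rw [← hb3, pow_mul_eq_neg_one_pow_smul hba]
    norm_num
  rw [mul_assoc, add_mul, hba] at h
  rw [← sub_eq_zero.mpr h]
  noncomm_ring

end AnticommutingPair

def orderedMonomials {A : Type*} [Monoid A] (a b : A) (ij : Fin 3 × Fin 3) : A :=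
  a ^ (ij.1 : ℕ) * b ^ (ij.2 : ℕ)

section Spanning

variable {K A : Type*} [CommRing K] [Ring A] [Algebra K A]

theorem Algebra.adjoin_le_of_one_mem_of_mul_mem {s : Set A} {T : Submodule K A} (h1 : 1 ∈ T)
    (hmul : ∀ t ∈ T, ∀ x ∈ s, t * x ∈ T) :
    Subalgebra.toSubmodule (Algebra.adjoin K s) ≤ T := by
  intro x hx
  suffices ∀ t ∈ T, t * x ∈ T by simpa using this 1 h1
  induction hx using Algebra.adjoin_induction with
  | mem x hx => exact fun t ht => hmul t ht x hx
  | algebraMap r =>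
    intro t ht
    rw [← Algebra.commutes, ← Algebra.smul_def]
    exact T.smul_mem r ht
  | add x y _ _ hx hy =>
    intro t ht
    rw [mul_add]
    exact add_mem (hx t ht) (hy t ht)
  | mul x y _ _ hx hy =>
    intro t ht
    rw [← mul_assoc]
    exact hy _ (hx t ht)

variable {a b : A}

theorem span_pow_mul_pow_eq_top (hgen : Algebra.adjoin K {a, b} = ⊤) (hba : b * a = -(a * b)) :
    Submodule.span K (Set.range fun ij : ℕ × ℕ => a ^ ij.1 * b ^ ij.2) = ⊤ := by
  refine top_le_iff.mp ?_
  rw [← Algebra.top_toSubmodule, ← hgen]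
  refine Algebra.adjoin_le_of_one_mem_of_mul_mem
    (Submodule.subset_span ⟨(0, 0), by simp⟩) fun t ht x hx => ?_
  induction ht using Submodule.span_induction with
  | mem t ht =>
    obtain ⟨⟨i, j⟩, rfl⟩ := ht
    obtain hx | hx : x = a ∨ x = b := hx
    · rw [hx, mul_assoc, pow_mul_eq_neg_one_pow_smul hba, mul_smul_comm, ← mul_assoc,
        ← pow_succ]
      refine zsmul_mem (Submodule.subset_span ?_) _
      exact ⟨(i + 1, j), rfl⟩
    · rw [hx, mul_assoc, ← pow_succ]
      exact Submodule.subset_span ⟨(i, j + 1), rfl⟩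
  | zero => simp
  | add s t _ _ hs ht => rw [add_mul]; exact add_mem hs ht
  | smul c t _ ht => rw [smul_mul_assoc]; exact Submodule.smul_mem _ c ht

theorem pow_mul_pow_mem_span_orderedMonomials (hb3 : b ^ 3 = a ^ 2 * (1 + b)) (ha3 : a ^ 3 = 0)
    (i j : ℕ) : a ^ i * b ^ j ∈ Submodule.span K (Set.range (orderedMonomials a b)) := by
  induction j using Nat.strong_induction_on generalizing i with
  | _ j ih =>
    by_cases hi : 3 ≤ i
    · simp [pow_eq_zero_of_le hi ha3]
    by_cases hj : j < 3
    · exact Submodule.subset_span ⟨(⟨i, by omega⟩, ⟨j, hj⟩), rfl⟩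
    obtain ⟨k, rfl⟩ : ∃ k, j = k + 3 := ⟨j - 3, by omega⟩
    have h : a ^ i * b ^ (k + 3) = a ^ (i + 2) * b ^ k + a ^ (i + 2) * b ^ (k + 1) := by
      rw [pow_add b k 3, (Commute.pow_pow_self b k 3).eq, ← mul_assoc, hb3, pow_add a i 2,
        pow_succ' b k]
      noncomm_ring
    rw [h]
    exact add_mem (ih k (by omega) _) (ih (k + 1) (by omega) _)

theorem span_orderedMonomials_eq_top (hgen : Algebra.adjoin K {a, b} = ⊤)
    (hba : b * a = -(a * b)) (hrel : -a ^ 2 + b ^ 3 + a * b * a = 0) (ha3 : a ^ 3 = 0) :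
    Submodule.span K (Set.range (orderedMonomials a b)) = ⊤ := by
  refine top_le_iff.mp ((span_pow_mul_pow_eq_top hgen hba).ge.trans (Submodule.span_le.mpr ?_))
  rintro _ ⟨⟨i, j⟩, rfl⟩
  exact pow_mul_pow_mem_span_orderedMonomials (pow_three_eq_sq_mul hba hrel) ha3 i j

end Spanning

namespace GamRel

local notation "Γ" => RingQuot GamRel

noncomputable def a : Γ := RingQuot.mkAlgHom ℂ GamRel (ι ℂ 0)

noncomputable def b : Γ := RingQuot.mkAlgHom ℂ GamRel (ι ℂ 1)

theorem b_mul_a : b * a = -(a * b) :=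
  eq_neg_of_add_eq_zero_right (by simpa [a, b] using RingQuot.mkAlgHom_rel ℂ r1)

theorem cubic_relation : -a ^ 2 + b ^ 3 + a * b * a = 0 := by
  simpa [a, b] using RingQuot.mkAlgHom_rel ℂ r2

theorem a_pow_three : a ^ 3 = 0 := by
  have h := pow_three_add_pow_three_eq_zero b_mul_a cubic_relation
  rw [← two_smul ℂ, smul_eq_zero] at h
  exact h.resolve_left two_ne_zero

theorem adjoin_pair_eq_top : Algebra.adjoin ℂ {a, b} = ⊤ := by
  have : ({a, b} : Set Γ) = RingQuot.mkAlgHom ℂ GamRel '' Set.range (ι ℂ) := by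
    ext; simp [a, b, Fin.exists_fin_two, eq_comm]
  rw [this, Algebra.adjoin_image, FreeAlgebra.adjoin_range_ι, Algebra.map_top,
    AlgHom.range_eq_top]
  exact RingQuot.mkAlgHom_surjective ℂ GamRel

theorem span_orderedMonomials : Submodule.span ℂ (Set.range (orderedMonomials a b)) = ⊤ :=
  span_orderedMonomials_eq_top adjoin_pair_eq_top b_mul_a cubic_relation a_pow_three

/-- `matA` and `matB` are left multiplication by `a` and `b` on Γ, in the basis `a ^ i * b ^ j`
indexed by `(i, j)`. -/
def matA : Matrix (Fin 3 × Fin 3) (Fin 3 × Fin 3) ℤ :=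
  Matrix.of fun r c => if (r.1 : ℕ) = c.1 + 1 ∧ r.2 = c.2 then 1 else 0

def matB : Matrix (Fin 3 × Fin 3) (Fin 3 × Fin 3) ℤ :=
  Matrix.of fun r c =>
    if (c.2 : ℕ) < 2 then (if r.1 = c.1 ∧ (r.2 : ℕ) = c.2 + 1 then (-1) ^ (c.1 : ℕ) else 0)
    else if (c.1 : ℕ) = 0 ∧ (r.1 : ℕ) = 2 ∧ (r.2 : ℕ) < 2 then 1 else 0

theorem matA_mul_matB_add_matB_mul_matA : matA * matB + matB * matA = 0 := by decide

theorem matA_matB_cubic_relation : -matA ^ 2 + matB ^ 3 + matA * matB * matA = 0 := by decide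

theorem matA_pow_mul_matB_pow_apply_zero (ij r : Fin 3 × Fin 3) :
    (matA ^ (ij.1 : ℕ) * matB ^ (ij.2 : ℕ)) r (0, 0) = if r = ij then 1 else 0 := by
  revert ij r; decide

noncomputable def matrixRep : Γ →ₐ[ℂ] Matrix (Fin 3 × Fin 3) (Fin 3 × Fin 3) ℂ :=
  RingQuot.liftAlgHom ℂ ⟨FreeAlgebra.lift ℂ
    ![(Int.castRingHom ℂ).mapMatrix matA, (Int.castRingHom ℂ).mapMatrix matB], by
    rintro _ _ (_ | _)
    · simpa only [map_add, map_mul, map_zero, lift_ι_apply, Matrix.cons_val_zero,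
        Matrix.cons_val_one] using
        congrArg (Int.castRingHom ℂ).mapMatrix matA_mul_matB_add_matB_mul_matA
    · simpa only [map_add, map_mul, map_pow, map_neg, map_zero, lift_ι_apply,
        Matrix.cons_val_zero, Matrix.cons_val_one] using
        congrArg (Int.castRingHom ℂ).mapMatrix matA_matB_cubic_relation⟩

theorem matrixRep_orderedMonomials (ij : Fin 3 × Fin 3) :
    matrixRep (orderedMonomials a b ij) =
      (Int.castRingHom ℂ).mapMatrix (matA ^ (ij.1 : ℕ) * matB ^ (ij.2 : ℕ)) := by
  simp only [orderedMonomials, a, b, matrixRep, map_mul, map_pow,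
    RingQuot.liftAlgHom_mkAlgHom_apply, lift_ι_apply, Matrix.cons_val_zero, Matrix.cons_val_one]

theorem linearIndependent_orderedMonomials : LinearIndependent ℂ (orderedMonomials a b) := by
  refine Fintype.linearIndependent_iff.mpr fun c hc r => ?_
  simpa [Matrix.sum_apply, matrixRep_orderedMonomials, matA_pow_mul_matB_pow_apply_zero] using
    congrArg (fun x => matrixRep x r (0, 0)) hc

end GamRel

theorem stmt2 :
    Module.finrank ℂ (RingQuot GamRel) = 9 := by
  rw [Module.finrank_eq_card_basis (Module.Basis.mk GamRel.linearIndependent_orderedMonomials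
    GamRel.span_orderedMonomials.ge)]
  rfl
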